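/- Fix λ > 0 and define Ψ_λ(y) = V_λ^{Γ_λ(y,·)} ∈ ℝ^d (the entropy-regularized continuation value of the Gibbs policy induced by y). Then y ∈ ℝ^d satisfies Ψ_λ(y) = y if and only if y = V^π_λ for some relaxed equilibrium π of the entropy-regularized MDP; in that case π = Γ_λ(y,·) is such an equilibrium. -/

import Mathlib

/-!
Fix `y` and put `g_i(u) = f(0,i,u) + p^u_i · y`. For a density `ρ` on `U`, the one-step value
`∫ g_i ρ + λ H(ρ)` equals `λ log Z_i - λ KL(ρ ‖ Γ_λ(y,i))`, so `Γ_λ(y,i)` is its maximiser, unique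
up to null sets (Gibbs variational principle). The value of `π' ⊗₁ π` at `i` is this one-step
value for `y = V_λ^π` and `ρ = π'(i)`, and `J_λ^π = J_λ^{π ⊗₁ π}`. Hence a fixed point
`y = V_λ^{Γ_λ(y,·)}` makes `Γ_λ(y,·)` an equilibrium; conversely, comparing an equilibrium `π`
with the deviation `Γ_λ(V_λ^π,·)` forces `π = Γ_λ(V_λ^π,·)` a.e., so `V_λ^π` is a fixed point.
-/

open MeasureTheory Real

noncomputable section

variable (ℓ d : ℕ) (U : Set (EuclideanSpace ℝ (Fin ℓ)))
  (f : ℕ → Fin d → EuclideanSpace ℝ (Fin ℓ) → ℝ)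
  (p : EuclideanSpace ℝ (Fin ℓ) → Fin d → Fin d → ℝ)
  (dis : ℕ → ℝ) (lam : ℝ)
variable (ℓ d : ℕ) (U : Set (EuclideanSpace ℝ (Fin ℓ)))
  (f : ℕ → Fin d → EuclideanSpace ℝ (Fin ℓ) → ℝ)
  (p : EuclideanSpace ℝ (Fin ℓ) → Fin d → Fin d → ℝ)
  (dis : ℕ → ℝ) (lam : ℝ)

/-- Shannon differential entropy of a density on `U`. -/
def Hent (ρ : EuclideanSpace ℝ (Fin ℓ) → ℝ) : ℝ := -∫ u in U, ρ u * Real.log (ρ u)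

/-- Transition matrix induced by a relaxed (density-valued) feedback control `pol`. -/
def Pmat (pol : Fin d → EuclideanSpace ℝ (Fin ℓ) → ℝ) : Matrix (Fin d) (Fin d) ℝ :=
  Matrix.of fun i j => ∫ u in U, p u i j * pol i u

/-- Entropy-regularized running reward, at "time-difference" `k`, of control `pol`. -/
def rvec (pol : Fin d → EuclideanSpace ℝ (Fin ℓ) → ℝ) (k : ℕ) : Fin d → ℝ :=
  fun i => (∫ u in U, f k i u * pol i u) + lam * dis k * Hent ℓ U (pol i)

/-- The entropy-regularized value `J_λ^pol(i) = E_i[Σ_k (f^{pol}(k,X_k) + λδ(k)H(pol(X_k)))]`. -/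
def Jlam (pol : Fin d → EuclideanSpace ℝ (Fin ℓ) → ℝ) : Fin d → ℝ :=
  ∑' k : ℕ, ((Pmat ℓ d U p pol) ^ k).mulVec (rvec ℓ d U f dis lam pol k)

/-- The auxiliary continuation value `V_λ^pol(i)`, with rewards shifted by one time step. -/
def Vlam (pol : Fin d → EuclideanSpace ℝ (Fin ℓ) → ℝ) : Fin d → ℝ :=
  ∑' k : ℕ, ((Pmat ℓ d U p pol) ^ k).mulVec (rvec ℓ d U f dis lam pol (k + 1))

/-- The value `J_λ^{pol'⊗₁pol}` of the concatenation of `pol'` (at time 0) and `pol` (from time 1 on). -/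
def Jcat (pol' pol : Fin d → EuclideanSpace ℝ (Fin ℓ) → ℝ) : Fin d → ℝ :=
  fun i => rvec ℓ d U f dis lam pol' 0 i + (Pmat ℓ d U p pol').mulVec (Vlam ℓ d U f p dis lam pol) i

/-- `pol` is a regular relaxed feedback control: each `pol i` is a probability density on `U`
with finite differential entropy. -/
def IsRegularControl (pol : Fin d → EuclideanSpace ℝ (Fin ℓ) → ℝ) : Prop :=
  ∀ i, Measurable (pol i) ∧ (∀ u ∈ U, 0 ≤ pol i u) ∧ (∀ u, u ∉ U → pol i u = 0) ∧
    (∫ u in U, pol i u) = 1 ∧ IntegrableOn (fun u => pol i u * Real.log (pol i u)) U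

/-- `pol` is a relaxed equilibrium for the entropy-regularized MDP:
`J_λ^{pol'⊗₁pol}(i) ≤ J_λ^pol(i)` for all regular `pol'` and all states `i`. -/
def IsRelaxedEquilibrium (pol : Fin d → EuclideanSpace ℝ (Fin ℓ) → ℝ) : Prop :=
  IsRegularControl ℓ d U pol ∧
  ∀ pol', IsRegularControl ℓ d U pol' → ∀ i, Jcat ℓ d U f p dis lam pol' pol i ≤ Jlam ℓ d U f p dis lam pol i


/-- The Gibbs relaxed control `Γ_λ(y, i)(u) = e^{(f(0,i,u)+p^u_i·y)/λ}/∫_U e^{(f(0,i,v)+p^v_i·y)/λ} dv`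
induced by a vector `y ∈ ℝ^d` (extended by `0` off `U`). -/
def gibbsPol (y : Fin d → ℝ) : Fin d → EuclideanSpace ℝ (Fin ℓ) → ℝ :=
  fun i => U.indicator fun u =>
    Real.exp ((f 0 i u + ∑ j, p u i j * y j) / lam)
      / ∫ v in U, Real.exp ((f 0 i v + ∑ j, p v i j * y j) / lam)

section GibbsVariational

open InformationTheory

lemma mul_klFun_div {a b : ℝ} (hb : 0 < b) :
    b * klFun (a / b) = a * log a - a * log b + b - a := by
  rcases eq_or_ne a 0 with rfl | ha
  · simp [klFun]
  · rw [klFun, log_div ha hb.ne']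
    field_simp

variable {α : Type*} [MeasurableSpace α] {μ : Measure α} {g ρ : α → ℝ} {lam M : ℝ}

def gibbsDensity (μ : Measure α) (g : α → ℝ) (lam : ℝ) (u : α) : ℝ :=
  exp (g u / lam) / ∫ v, exp (g v / lam) ∂μ

def gibbsFunctional (μ : Measure α) (g : α → ℝ) (lam : ℝ) (ρ : α → ℝ) : ℝ :=
  ∫ u, g u * ρ u ∂μ - lam * ∫ u, ρ u * log (ρ u) ∂μ

lemma gibbsFunctional_congr_ae {ρ' : α → ℝ} (h : ρ =ᵐ[μ] ρ') :
    gibbsFunctional μ g lam ρ = gibbsFunctional μ g lam ρ' := by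
  have hlin : (fun u => g u * ρ u) =ᵐ[μ] fun u => g u * ρ' u :=
    h.mono fun u hu => by simp only [hu]
  have hlog : (fun u => ρ u * log (ρ u)) =ᵐ[μ] fun u => ρ' u * log (ρ' u) :=
    h.mono fun u hu => by simp only [hu]
  rw [gibbsFunctional, gibbsFunctional, integral_congr_ae hlin, integral_congr_ae hlog]

lemma MeasureTheory.Integrable.of_integral_eq_one (h : ∫ u, ρ u ∂μ = 1) :
    Integrable ρ μ := by
  by_contra hρ
  simp [integral_undef hρ] at h

lemma MeasureTheory.Integrable.mul_of_abs_le (hρ : Integrable ρ μ)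
    (hg : AEStronglyMeasurable g μ) (hM : ∀ᵐ u ∂μ, |g u| ≤ M) :
    Integrable (fun u => g u * ρ u) μ :=
  hρ.bdd_mul hg (by simpa only [Real.norm_eq_abs] using hM)

lemma abs_integral_mul_le_of_abs_le (hM : ∀ᵐ u ∂μ, |g u| ≤ M)
    (hρ0 : 0 ≤ᵐ[μ] ρ) (hρ1 : ∫ u, ρ u ∂μ = 1) : |∫ u, g u * ρ u ∂μ| ≤ M := by
  have hρ := Integrable.of_integral_eq_one hρ1
  calc |∫ u, g u * ρ u ∂μ| = ‖∫ u, g u * ρ u ∂μ‖ := (Real.norm_eq_abs _).symm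
    _ ≤ ∫ u, M * ρ u ∂μ := by
        refine norm_integral_le_of_norm_le (hρ.const_mul M) ?_
        filter_upwards [hM, hρ0] with u hu hu0
        rw [Real.norm_eq_abs, abs_mul, abs_of_nonneg hu0]
        exact mul_le_mul_of_nonneg_right hu hu0
    _ = M := by rw [integral_const_mul, hρ1, mul_one]

variable [IsFiniteMeasure μ]

lemma integrable_exp_div (hg : Measurable g) (hM : ∀ᵐ u ∂μ, |g u| ≤ M) :
    Integrable (fun u => exp (g u / lam)) μ := by
  refine .of_bound (hg.div_const lam).exp.aestronglyMeasurable (exp (M / |lam|)) ?_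
  filter_upwards [hM] with u hu
  rw [Real.norm_of_nonneg (exp_pos _).le, exp_le_exp]
  calc g u / lam ≤ |g u / lam| := le_abs_self _
    _ = |g u| / |lam| := abs_div _ _
    _ ≤ M / |lam| := div_le_div_of_nonneg_right hu (abs_nonneg _)

lemma integrable_gibbsDensity (hg : Measurable g) (hM : ∀ᵐ u ∂μ, |g u| ≤ M) :
    Integrable (gibbsDensity μ g lam) μ :=
  (integrable_exp_div hg hM).div_const _

variable [NeZero μ]

lemma integral_exp_div_pos (hg : Measurable g) (hM : ∀ᵐ u ∂μ, |g u| ≤ M) :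
    0 < ∫ u, exp (g u / lam) ∂μ :=
  integral_exp_pos (integrable_exp_div hg hM)

lemma gibbsDensity_pos (hg : Measurable g) (hM : ∀ᵐ u ∂μ, |g u| ≤ M) (u : α) :
    0 < gibbsDensity μ g lam u :=
  div_pos (exp_pos _) (integral_exp_div_pos hg hM)

lemma log_gibbsDensity (hg : Measurable g) (hM : ∀ᵐ u ∂μ, |g u| ≤ M) (u : α) :
    log (gibbsDensity μ g lam u) = g u / lam - log (∫ v, exp (g v / lam) ∂μ) := by
  rw [gibbsDensity, log_div (exp_pos _).ne' (integral_exp_div_pos hg hM).ne', log_exp]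

lemma integral_gibbsDensity (hg : Measurable g) (hM : ∀ᵐ u ∂μ, |g u| ≤ M) :
    ∫ u, gibbsDensity μ g lam u ∂μ = 1 := by
  simp only [gibbsDensity, integral_div]
  exact div_self (integral_exp_div_pos hg hM).ne'

lemma integrable_gibbsDensity_mul_log (hg : Measurable g) (hM : ∀ᵐ u ∂μ, |g u| ≤ M) :
    Integrable (fun u => gibbsDensity μ g lam u * log (gibbsDensity μ g lam u)) μ := by
  have hγ := integrable_gibbsDensity (lam := lam) hg hM
  refine ((hγ.mul_of_abs_le hg.aestronglyMeasurable hM).div_const lam |>.sub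
    (hγ.const_mul (log (∫ v, exp (g v / lam) ∂μ)))).congr (.of_forall fun u => ?_)
  simp only [Pi.sub_apply, log_gibbsDensity hg hM]
  ring

lemma gibbsDensity_mul_klFun_div (hg : Measurable g) (hM : ∀ᵐ u ∂μ, |g u| ≤ M) (u : α) :
    gibbsDensity μ g lam u * klFun (ρ u / gibbsDensity μ g lam u) =
      ρ u * log (ρ u) - g u * ρ u / lam + (log (∫ v, exp (g v / lam) ∂μ) - 1) * ρ u
        + gibbsDensity μ g lam u := by
  rw [mul_klFun_div (gibbsDensity_pos hg hM u), log_gibbsDensity hg hM]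
  ring

lemma integrable_gibbsDensity_mul_klFun (hg : Measurable g) (hM : ∀ᵐ u ∂μ, |g u| ≤ M)
    (hρ1 : ∫ u, ρ u ∂μ = 1) (hρlog : Integrable (fun u => ρ u * log (ρ u)) μ) :
    Integrable (fun u => gibbsDensity μ g lam u * klFun (ρ u / gibbsDensity μ g lam u)) μ := by
  have hρ := Integrable.of_integral_eq_one hρ1
  simp only [gibbsDensity_mul_klFun_div hg hM]
  exact ((hρlog.sub ((hρ.mul_of_abs_le hg.aestronglyMeasurable hM).div_const lam)).add
    (hρ.const_mul _)).add (integrable_gibbsDensity hg hM)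

/-- The Gibbs variational identity; the integral on the right is `KL(ρ ‖ γ)`. -/
lemma gibbsFunctional_eq_sub_integral_klFun (hlam : lam ≠ 0) (hg : Measurable g)
    (hM : ∀ᵐ u ∂μ, |g u| ≤ M) (hρ1 : ∫ u, ρ u ∂μ = 1)
    (hρlog : Integrable (fun u => ρ u * log (ρ u)) μ) :
    gibbsFunctional μ g lam ρ = lam * log (∫ v, exp (g v / lam) ∂μ)
      - lam * ∫ u, gibbsDensity μ g lam u * klFun (ρ u / gibbsDensity μ g lam u) ∂μ := by
  have hρ := Integrable.of_integral_eq_one hρ1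
  have hgρ := (hρ.mul_of_abs_le hg.aestronglyMeasurable hM).div_const lam
  have hint1 : Integrable (fun u => ρ u * log (ρ u) - g u * ρ u / lam) μ := hρlog.sub hgρ
  have hint2 : Integrable (fun u => ρ u * log (ρ u) - g u * ρ u / lam
      + (log (∫ v, exp (g v / lam) ∂μ) - 1) * ρ u) μ := hint1.add (hρ.const_mul _)
  simp only [gibbsDensity_mul_klFun_div hg hM]
  rw [integral_add hint2 (integrable_gibbsDensity hg hM), integral_add hint1 (hρ.const_mul _),
    integral_sub hρlog hgρ, integral_const_mul, integral_div, hρ1, integral_gibbsDensity hg hM,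
    gibbsFunctional]
  field_simp
  ring

lemma gibbsFunctional_gibbsDensity (hlam : lam ≠ 0) (hg : Measurable g)
    (hM : ∀ᵐ u ∂μ, |g u| ≤ M) :
    gibbsFunctional μ g lam (gibbsDensity μ g lam) =
      lam * log (∫ v, exp (g v / lam) ∂μ) := by
  rw [gibbsFunctional_eq_sub_integral_klFun hlam hg hM (integral_gibbsDensity hg hM)
    (integrable_gibbsDensity_mul_log hg hM)]
  simp [div_self (gibbsDensity_pos hg hM _).ne', klFun_one]

lemma gibbsDensity_mul_klFun_div_nonneg (hg : Measurable g) (hM : ∀ᵐ u ∂μ, |g u| ≤ M)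
    (hρ0 : 0 ≤ᵐ[μ] ρ) :
    0 ≤ᵐ[μ] fun u => gibbsDensity μ g lam u * klFun (ρ u / gibbsDensity μ g lam u) := by
  filter_upwards [hρ0] with u hu
  have hγ := gibbsDensity_pos (lam := lam) hg hM u
  exact mul_nonneg hγ.le (klFun_nonneg (div_nonneg hu hγ.le))

lemma gibbsFunctional_le_gibbsDensity (hlam : 0 < lam) (hg : Measurable g)
    (hM : ∀ᵐ u ∂μ, |g u| ≤ M) (hρ0 : 0 ≤ᵐ[μ] ρ) (hρ1 : ∫ u, ρ u ∂μ = 1)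
    (hρlog : Integrable (fun u => ρ u * log (ρ u)) μ) :
    gibbsFunctional μ g lam ρ ≤ gibbsFunctional μ g lam (gibbsDensity μ g lam) := by
  rw [gibbsFunctional_gibbsDensity hlam.ne' hg hM,
    gibbsFunctional_eq_sub_integral_klFun hlam.ne' hg hM hρ1 hρlog, sub_le_self_iff]
  exact mul_nonneg hlam.le (integral_nonneg_of_ae (gibbsDensity_mul_klFun_div_nonneg hg hM hρ0))

lemma ae_eq_gibbsDensity_of_le (hlam : 0 < lam) (hg : Measurable g)
    (hM : ∀ᵐ u ∂μ, |g u| ≤ M) (hρ0 : 0 ≤ᵐ[μ] ρ) (hρ1 : ∫ u, ρ u ∂μ = 1)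
    (hρlog : Integrable (fun u => ρ u * log (ρ u)) μ)
    (hle : gibbsFunctional μ g lam (gibbsDensity μ g lam) ≤ gibbsFunctional μ g lam ρ) :
    ρ =ᵐ[μ] gibbsDensity μ g lam := by
  rw [gibbsFunctional_gibbsDensity hlam.ne' hg hM,
    gibbsFunctional_eq_sub_integral_klFun hlam.ne' hg hM hρ1 hρlog, le_sub_self_iff] at hle
  have hkl0 := gibbsDensity_mul_klFun_div_nonneg (lam := lam) hg hM hρ0
  have hkl := (integral_eq_zero_iff_of_nonneg_ae hkl0
    (integrable_gibbsDensity_mul_klFun hg hM hρ1 hρlog)).1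
    (le_antisymm (nonpos_of_mul_nonpos_right hle hlam) (integral_nonneg_of_ae hkl0))
  filter_upwards [hkl, hρ0] with u hu hu0
  have hγ := gibbsDensity_pos (lam := lam) hg hM u
  rwa [Pi.zero_apply, mul_eq_zero, or_iff_right hγ.ne', klFun_eq_zero_iff (div_nonneg hu0 hγ.le),
    div_eq_one_iff_eq hγ.ne'] at hu

end GibbsVariational

section RowStochastic

open Matrix

lemma abs_sum_mul_le_norm {ι : Type*} [Fintype ι] {w y : ι → ℝ} (hw0 : ∀ j, 0 ≤ w j)
    (hw1 : ∑ j, w j = 1) : |∑ j, w j * y j| ≤ ‖y‖ :=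
  calc |∑ j, w j * y j| ≤ ∑ j, w j * ‖y‖ := by
        refine (Finset.abs_sum_le_sum_abs _ _).trans (Finset.sum_le_sum fun j _ => ?_)
        rw [abs_mul, abs_of_nonneg (hw0 j)]
        exact mul_le_mul_of_nonneg_left (norm_le_pi_norm y j) (hw0 j)
    _ = ‖y‖ := by rw [← Finset.sum_mul, hw1, one_mul]

variable {n : Type*} [Fintype n] [DecidableEq n] {P : Matrix n n ℝ} {r : ℕ → n → ℝ}

lemma norm_mulVec_le_of_mem_rowStochastic (hP : P ∈ rowStochastic ℝ n) (v : n → ℝ) :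
    ‖P *ᵥ v‖ ≤ ‖v‖ :=
  (pi_norm_le_iff_of_nonneg (norm_nonneg v)).2 fun i =>
    abs_sum_mul_le_norm (hP.1 i) (sum_row_of_mem_rowStochastic hP i)

lemma summable_pow_mulVec_of_mem_rowStochastic (hP : P ∈ rowStochastic ℝ n)
    (hr : Summable fun k => ‖r k‖) : Summable fun k => (P ^ k) *ᵥ r k :=
  .of_norm_bounded hr fun k => norm_mulVec_le_of_mem_rowStochastic (pow_mem hP k) (r k)

lemma tsum_pow_mulVec_eq_add (hP : P ∈ rowStochastic ℝ n) (hr : Summable fun k => ‖r k‖) :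
    ∑' k, (P ^ k) *ᵥ r k = r 0 + P *ᵥ ∑' k, (P ^ k) *ᵥ r (k + 1) := by
  have hshift := summable_pow_mulVec_of_mem_rowStochastic hP ((summable_nat_add_iff 1).2 hr)
  rw [(summable_pow_mulVec_of_mem_rowStochastic hP hr).tsum_eq_zero_add, pow_zero, one_mulVec]
  congr 1
  change _ = (mulVecLin P).toContinuousLinearMap _
  rw [ContinuousLinearMap.map_tsum _ hshift]
  simp [pow_succ', mulVec_mulVec]

end RowStochastic

/-- The exponent `f(0,i,u) + p^u_i · y` of the Gibbs policy: `gibbsPol` is, by definition, the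
indicator on `U` of `gibbsDensity (volume.restrict U) (oneStepReward ℓ d f p y i) lam`. -/
def oneStepReward (y : Fin d → ℝ) (i : Fin d) (u : EuclideanSpace ℝ (Fin ℓ)) : ℝ :=
  f 0 i u + ∑ j, p u i j * y j

section Model

open Matrix

variable {ℓ d U f p dis lam} {pol pol' : Fin d → EuclideanSpace ℝ (Fin ℓ) → ℝ}
  {b : ℕ → ℝ}

lemma measurable_oneStepReward (hfmeas : ∀ t i, Measurable (f t i))
    (hpmeas : ∀ i j, Measurable (fun u => p u i j)) (y : Fin d → ℝ) (i : Fin d) :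
    Measurable (oneStepReward ℓ d f p y i) :=
  (hfmeas 0 i).add (Finset.measurable_sum _ fun j _ => (hpmeas i j).mul_const _)

lemma ae_abs_oneStepReward_le (hUmeas : MeasurableSet U)
    (hstoch : ∀ u ∈ U, ∀ i, (∀ j, 0 ≤ p u i j) ∧ (∑ j, p u i j) = 1)
    (hb : ∀ t i, ∀ u ∈ U, |f t i u| ≤ b t) (y : Fin d → ℝ) (i : Fin d) :
    ∀ᵐ u ∂volume.restrict U, |oneStepReward ℓ d f p y i u| ≤ b 0 + ‖y‖ :=
  ae_restrict_of_forall_mem hUmeas fun u hu => (abs_add_le _ _).trans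
    (add_le_add (hb 0 i u hu) (abs_sum_mul_le_norm (hstoch u hu i).1 (hstoch u hu i).2))

lemma abs_transition_le_one
    (hstoch : ∀ u ∈ U, ∀ i, (∀ j, 0 ≤ p u i j) ∧ (∑ j, p u i j) = 1)
    {u} (hu : u ∈ U) (i j : Fin d) : |p u i j| ≤ 1 := by
  rw [abs_of_nonneg ((hstoch u hu i).1 j), ← (hstoch u hu i).2]
  exact Finset.single_le_sum (fun k _ => (hstoch u hu i).1 k) (Finset.mem_univ j)

lemma IsRegularControl.ae_nonneg (hUmeas : MeasurableSet U) (hpol : IsRegularControl ℓ d U pol)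
    (i : Fin d) : 0 ≤ᵐ[volume.restrict U] pol i :=
  ae_restrict_of_forall_mem hUmeas (hpol i).2.1

lemma IsRegularControl.integrableOn_mul (hUmeas : MeasurableSet U)
    (hpol : IsRegularControl ℓ d U pol) (i : Fin d) {q : EuclideanSpace ℝ (Fin ℓ) → ℝ}
    {C : ℝ} (hq : Measurable q) (hC : ∀ u ∈ U, |q u| ≤ C) :
    IntegrableOn (fun u => q u * pol i u) U :=
  (Integrable.of_integral_eq_one (hpol i).2.2.2.1).mul_of_abs_le hq.aestronglyMeasurable
    (ae_restrict_of_forall_mem hUmeas hC)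

lemma Pmat_mem_rowStochastic (hUmeas : MeasurableSet U)
    (hpmeas : ∀ i j, Measurable (fun u => p u i j))
    (hstoch : ∀ u ∈ U, ∀ i, (∀ j, 0 ≤ p u i j) ∧ (∑ j, p u i j) = 1)
    (hpol : IsRegularControl ℓ d U pol) :
    Pmat ℓ d U p pol ∈ Matrix.rowStochastic ℝ (Fin d) := by
  refine Matrix.mem_rowStochastic_iff_sum.2 ⟨fun i j => setIntegral_nonneg hUmeas fun u hu =>
    mul_nonneg ((hstoch u hu i).1 j) ((hpol i).2.1 u hu), fun i => ?_⟩
  simp only [Pmat, Matrix.of_apply]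
  rw [← integral_finsetSum _ fun j _ => hpol.integrableOn_mul hUmeas i (hpmeas i j)
    fun u hu => abs_transition_le_one hstoch hu i j, ← (hpol i).2.2.2.1]
  refine setIntegral_congr_fun hUmeas fun u hu => ?_
  rw [← Finset.sum_mul, (hstoch u hu i).2, one_mul]

lemma norm_rvec_le (hUmeas : MeasurableSet U) (hb : ∀ t i, ∀ u ∈ U, |f t i u| ≤ b t)
    (hpol : IsRegularControl ℓ d U pol) (k : ℕ) :
    ‖rvec ℓ d U f dis lam pol k‖ ≤
      |b k| + |lam * dis k| * ‖fun i => Hent ℓ U (pol i)‖ := by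
  refine (pi_norm_le_iff_of_nonneg (by positivity)).2 fun i => ?_
  rw [Real.norm_eq_abs, rvec]
  refine (abs_add_le _ _).trans (add_le_add ?_ ?_)
  · exact abs_integral_mul_le_of_abs_le (ae_restrict_of_forall_mem hUmeas fun u hu =>
      (hb k i u hu).trans (le_abs_self _)) (hpol.ae_nonneg hUmeas i) (hpol i).2.2.2.1
  · rw [abs_mul]
    exact mul_le_mul_of_nonneg_left (norm_le_pi_norm (fun i => Hent ℓ U (pol i)) i)
      (abs_nonneg _)

lemma summable_norm_rvec (hUmeas : MeasurableSet U) (hb : ∀ t i, ∀ u ∈ U, |f t i u| ≤ b t)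
    (hbsum : Summable b) (hdissum : Summable dis) (hpol : IsRegularControl ℓ d U pol) :
    Summable fun k => ‖rvec ℓ d U f dis lam pol k‖ :=
  .of_nonneg_of_le (fun _ => norm_nonneg _) (norm_rvec_le hUmeas hb hpol)
    (hbsum.abs.add ((hdissum.mul_left lam).abs.mul_right _))

lemma Jlam_eq_Jcat_self (hUmeas : MeasurableSet U)
    (hpmeas : ∀ i j, Measurable (fun u => p u i j))
    (hstoch : ∀ u ∈ U, ∀ i, (∀ j, 0 ≤ p u i j) ∧ (∑ j, p u i j) = 1)
    (hb : ∀ t i, ∀ u ∈ U, |f t i u| ≤ b t) (hbsum : Summable b) (hdissum : Summable dis)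
    (hpol : IsRegularControl ℓ d U pol) :
    Jlam ℓ d U f p dis lam pol = Jcat ℓ d U f p dis lam pol pol := by
  rw [Jlam, tsum_pow_mulVec_eq_add (Pmat_mem_rowStochastic hUmeas hpmeas hstoch hpol)
    (summable_norm_rvec hUmeas hb hbsum hdissum hpol)]
  rfl

lemma Jcat_eq_gibbsFunctional (hUmeas : MeasurableSet U) (hfmeas : ∀ t i, Measurable (f t i))
    (hpmeas : ∀ i j, Measurable (fun u => p u i j))
    (hstoch : ∀ u ∈ U, ∀ i, (∀ j, 0 ≤ p u i j) ∧ (∑ j, p u i j) = 1)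
    (hb : ∀ t i, ∀ u ∈ U, |f t i u| ≤ b t) (hdis0 : dis 0 = 1)
    (hpol' : IsRegularControl ℓ d U pol') (i : Fin d) :
    Jcat ℓ d U f p dis lam pol' pol i = gibbsFunctional (volume.restrict U)
      (oneStepReward ℓ d f p (Vlam ℓ d U f p dis lam pol) i) lam (pol' i) := by
  set v := Vlam ℓ d U f p dis lam pol
  have hp : ∀ j, IntegrableOn (fun u => p u i j * pol' i u * v j) U := fun j =>
    (hpol'.integrableOn_mul hUmeas i (hpmeas i j)
      fun u hu => abs_transition_le_one hstoch hu i j).mul_const _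
  have hmulVec :
      (Pmat ℓ d U p pol' *ᵥ v) i = ∫ u in U, (∑ j, p u i j * v j) * pol' i u := by
    simp only [Matrix.mulVec, dotProduct, Pmat, Matrix.of_apply, ← integral_mul_const]
    rw [← integral_finsetSum _ fun j _ => hp j]
    refine setIntegral_congr_fun hUmeas fun u _ => ?_
    simp only [Finset.sum_mul]
    exact Finset.sum_congr rfl fun j _ => by ring
  have hsum : IntegrableOn (fun u => (∑ j, p u i j * v j) * pol' i u) U :=
    hpol'.integrableOn_mul hUmeas i (Finset.measurable_sum _ fun j _ => (hpmeas i j).mul_const _)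
      fun u hu => abs_sum_mul_le_norm (hstoch u hu i).1 (hstoch u hu i).2
  rw [Jcat, rvec, hmulVec, hdis0, gibbsFunctional, Hent]
  simp only [oneStepReward, add_mul]
  rw [integral_add (hpol'.integrableOn_mul hUmeas i (hfmeas 0 i) (hb 0 i)) hsum]
  ring

lemma Vlam_congr_ae (h : ∀ i, pol i =ᵐ[volume.restrict U] pol' i) :
    Vlam ℓ d U f p dis lam pol = Vlam ℓ d U f p dis lam pol' := by
  have hint : ∀ i (q : EuclideanSpace ℝ (Fin ℓ) → ℝ),
      ∫ u in U, q u * pol i u = ∫ u in U, q u * pol' i u := fun i q =>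
    integral_congr_ae ((h i).mono fun u hu => by simp only [hu])
  have hHent : ∀ i, Hent ℓ U (pol i) = Hent ℓ U (pol' i) := fun i =>
    congrArg Neg.neg (integral_congr_ae ((h i).mono fun u hu => by simp only [hu]))
  have hPmat : Pmat ℓ d U p pol = Pmat ℓ d U p pol' := by
    ext i j
    exact hint i fun u => p u i j
  have hrvec : ∀ k, rvec ℓ d U f dis lam pol k = rvec ℓ d U f dis lam pol' k := fun k =>
    funext fun i => by simp only [rvec, hint i (f k i), hHent]
  simp only [Vlam, hPmat, hrvec]

lemma gibbsPol_ae_eq (hUmeas : MeasurableSet U) (y : Fin d → ℝ) (i : Fin d) :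
    gibbsPol ℓ d U f p lam y i =ᵐ[volume.restrict U]
      gibbsDensity (volume.restrict U) (oneStepReward ℓ d f p y i) lam :=
  indicator_ae_eq_restrict hUmeas

variable [IsFiniteMeasure (volume.restrict U)] [NeZero (volume.restrict U)]

lemma isRegularControl_gibbsPol (hUmeas : MeasurableSet U) (hfmeas : ∀ t i, Measurable (f t i))
    (hpmeas : ∀ i j, Measurable (fun u => p u i j))
    (hstoch : ∀ u ∈ U, ∀ i, (∀ j, 0 ≤ p u i j) ∧ (∑ j, p u i j) = 1)
    (hb : ∀ t i, ∀ u ∈ U, |f t i u| ≤ b t) (y : Fin d → ℝ) :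
    IsRegularControl ℓ d U (gibbsPol ℓ d U f p lam y) := fun i => by
  have hg := measurable_oneStepReward hfmeas hpmeas y i
  have hM := ae_abs_oneStepReward_le hUmeas hstoch hb y i
  have hΓ := gibbsPol_ae_eq (f := f) (p := p) (lam := lam) hUmeas y i
  refine ⟨((hg.div_const lam).exp.div_const _).indicator hUmeas,
    fun u _ => Set.indicator_nonneg (fun u _ => (gibbsDensity_pos hg hM u).le) u,
    fun u hu => Set.indicator_of_notMem hu _,
    (integral_congr_ae hΓ).trans (integral_gibbsDensity hg hM),
    (integrable_gibbsDensity_mul_log (lam := lam) hg hM).congr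
      (hΓ.mono fun u hu => by simp only [hu])⟩

lemma gibbsFunctional_le_gibbsPol (hlam : 0 < lam) (hUmeas : MeasurableSet U)
    (hfmeas : ∀ t i, Measurable (f t i)) (hpmeas : ∀ i j, Measurable (fun u => p u i j))
    (hstoch : ∀ u ∈ U, ∀ i, (∀ j, 0 ≤ p u i j) ∧ (∑ j, p u i j) = 1)
    (hb : ∀ t i, ∀ u ∈ U, |f t i u| ≤ b t) (hpol : IsRegularControl ℓ d U pol)
    (y : Fin d → ℝ) (i : Fin d) :
    gibbsFunctional (volume.restrict U) (oneStepReward ℓ d f p y i) lam (pol i) ≤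
      gibbsFunctional (volume.restrict U) (oneStepReward ℓ d f p y i) lam
        (gibbsPol ℓ d U f p lam y i) := by
  rw [gibbsFunctional_congr_ae (gibbsPol_ae_eq hUmeas y i)]
  exact gibbsFunctional_le_gibbsDensity hlam (measurable_oneStepReward hfmeas hpmeas y i)
    (ae_abs_oneStepReward_le hUmeas hstoch hb y i)
    (hpol.ae_nonneg hUmeas i) (hpol i).2.2.2.1 (hpol i).2.2.2.2

lemma ae_eq_gibbsPol_of_le (hlam : 0 < lam) (hUmeas : MeasurableSet U)
    (hfmeas : ∀ t i, Measurable (f t i)) (hpmeas : ∀ i j, Measurable (fun u => p u i j))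
    (hstoch : ∀ u ∈ U, ∀ i, (∀ j, 0 ≤ p u i j) ∧ (∑ j, p u i j) = 1)
    (hb : ∀ t i, ∀ u ∈ U, |f t i u| ≤ b t) (hpol : IsRegularControl ℓ d U pol)
    (y : Fin d → ℝ) (i : Fin d)
    (hle : gibbsFunctional (volume.restrict U) (oneStepReward ℓ d f p y i) lam
        (gibbsPol ℓ d U f p lam y i) ≤
      gibbsFunctional (volume.restrict U) (oneStepReward ℓ d f p y i) lam (pol i)) :
    pol i =ᵐ[volume.restrict U] gibbsPol ℓ d U f p lam y i := by
  rw [gibbsFunctional_congr_ae (gibbsPol_ae_eq hUmeas y i)] at hle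
  exact (ae_eq_gibbsDensity_of_le hlam (measurable_oneStepReward hfmeas hpmeas y i)
    (ae_abs_oneStepReward_le hUmeas hstoch hb y i)
    (hpol.ae_nonneg hUmeas i) (hpol i).2.2.2.1 (hpol i).2.2.2.2 hle).trans
    (gibbsPol_ae_eq hUmeas y i).symm

end Model

theorem gibbs_value_fixed_point_iff_equilibrium
    (hUmeas : MeasurableSet U) (hUc : IsCompact U) (hUpos : 0 < volume U)
    (hfmeas : ∀ t i, Measurable (f t i))
    (hpmeas : ∀ i j, Measurable (fun u => p u i j))
    (hstoch : ∀ u ∈ U, ∀ i, (∀ j, 0 ≤ p u i j) ∧ (∑ j, p u i j) = 1)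
    (b : ℕ → ℝ) (hb : ∀ t i, ∀ u ∈ U, |f t i u| ≤ b t) (hbsum : Summable b)
    (hdis0 : dis 0 = 1) (hdissum : Summable dis)
    (hlam : 0 < lam) (y : Fin d → ℝ) :
    (Vlam ℓ d U f p dis lam (gibbsPol ℓ d U f p lam y) = y ↔
      ∃ pol, IsRelaxedEquilibrium ℓ d U f p dis lam pol ∧ y = Vlam ℓ d U f p dis lam pol)
    ∧
    (Vlam ℓ d U f p dis lam (gibbsPol ℓ d U f p lam y) = y →
      IsRelaxedEquilibrium ℓ d U f p dis lam (gibbsPol ℓ d U f p lam y)) := by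
  have : IsFiniteMeasure (volume.restrict U) := isFiniteMeasure_restrict.2 hUc.measure_lt_top.ne
  have : NeZero (volume.restrict U) := ⟨by simpa using hUpos.ne'⟩
  have hΓ := isRegularControl_gibbsPol (lam := lam) hUmeas hfmeas hpmeas hstoch hb y
  have equilibrium_of_fixed : Vlam ℓ d U f p dis lam (gibbsPol ℓ d U f p lam y) = y →
      IsRelaxedEquilibrium ℓ d U f p dis lam (gibbsPol ℓ d U f p lam y) := by
    refine fun hfix => ⟨hΓ, fun pol' hpol' i => ?_⟩
    rw [Jlam_eq_Jcat_self hUmeas hpmeas hstoch hb hbsum hdissum hΓ,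
      Jcat_eq_gibbsFunctional hUmeas hfmeas hpmeas hstoch hb hdis0 hpol',
      Jcat_eq_gibbsFunctional hUmeas hfmeas hpmeas hstoch hb hdis0 hΓ, hfix]
    exact gibbsFunctional_le_gibbsPol hlam hUmeas hfmeas hpmeas hstoch hb hpol' y i
  refine ⟨⟨fun hfix => ⟨_, equilibrium_of_fixed hfix, hfix.symm⟩, ?_⟩,
    equilibrium_of_fixed⟩
  rintro ⟨pol, ⟨hpol, hopt⟩, rfl⟩
  refine Vlam_congr_ae fun i =>
    (ae_eq_gibbsPol_of_le hlam hUmeas hfmeas hpmeas hstoch hb hpol _ i ?_).symm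
  have hle := hopt _ hΓ i
  rwa [Jlam_eq_Jcat_self hUmeas hpmeas hstoch hb hbsum hdissum hpol,
    Jcat_eq_gibbsFunctional hUmeas hfmeas hpmeas hstoch hb hdis0 hΓ,
    Jcat_eq_gibbsFunctional hUmeas hfmeas hpmeas hstoch hb hdis0 hpol] at hle

end
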